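/- arXiv:hep-th/0408238 — 5 statements merged into one kernel-verified Lean document; each statement's English description precedes it below -/
import Mathlib

section
/- Let N ≥ 2, let C = {x ∈ ℝ^N : x_1 > x_2 > ⋯ > x_N > 0}, and let F be the type A prepotential with Λ = e^{3/2}. Then at every point of C its Hessian entries T_ij = ∂²F/∂x_i∂x_j satisfy e^{−T_ij} = e^{∑_{p=1}^N T_ip} − e^{∑_{q=1}^N T_jq} for all 1 ≤ i < j ≤ N. -/
open Real Finset

/-- Partial derivative in the `i`-th coordinate direction. -/
noncomputable def pd {N : ℕ} (i : Fin N) (f : (Fin N → ℝ) → ℝ) : (Fin N → ℝ) → ℝ :=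
  fun x => fderiv ℝ f x (Pi.single i 1)

/-- Hessian entry `T_ij = ∂²f/∂x_i∂x_j`. -/
noncomputable def hess {N : ℕ} (f : (Fin N → ℝ) → ℝ) (i j : Fin N) : (Fin N → ℝ) → ℝ :=
  pd i (pd j f)

/-- The open cone `x₁ > x₂ > ⋯ > x_N > 0`. -/
def cone (N : ℕ) : Set (Fin N → ℝ) := {x | StrictAnti x ∧ ∀ i, 0 < x i}

/-- The type A prepotential with cut-off `Λ`. -/
noncomputable def FA (N : ℕ) (Λ : ℝ) (x : Fin N → ℝ) : ℝ :=
  (1/2) * ∑ i : Fin N, ∑ j : Fin N,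
      (if i < j then (x i - x j)^2 * Real.log ((x i - x j)/Λ) else 0)
  + (1/2) * ∑ i : Fin N, (x i)^2 * Real.log (x i / Λ)

/-!
`F` is a sum of ridge functions `½ φ(ℓ x)` with `φ(t) = t² log(t/Λ)`, where `ℓ` runs over the
linear forms `x_a - x_b` (`a < b`) and `x_a`, all positive on the cone. Hence
`T = ½ ∑ φ''(ℓ x) ℓ ⊗ ℓ` with `φ''(t) = 2 log(t/Λ) + 3`. For `i < j` only `ℓ = x_i - x_j` contributes
to `T_ij`, giving `T_ij = -log((x_i - x_j)/Λ) - 3/2`; and since the forms `x_a - x_b` vanish on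
`(1, …, 1)`, only `ℓ = x_i` contributes to the row sum, giving `∑_p T_ip = log(x_i/Λ) + 3/2`.
With `Λ = e^{3/2}` these are `-log(x_i - x_j)` and `log x_i`.
-/

open Filter Topology

theorem fderiv_fderiv_apply_sum_comp_clm {E ι : Type*} [NormedAddCommGroup E] [NormedSpace ℝ E]
    (s : Finset ι) (c : ι → ℝ) (ℓ : ι → E →L[ℝ] ℝ) {φ φ' φ'' : ℝ → ℝ} {S : Set ℝ}
    (hS : IsOpen S) (hφ : ∀ t ∈ S, HasDerivAt φ (φ' t) t)
    (hφ' : ∀ t ∈ S, HasDerivAt φ' (φ'' t) t) {x : E} (hx : ∀ k ∈ s, ℓ k x ∈ S) (u v : E) :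
    fderiv ℝ (fun y => fderiv ℝ (fun z => ∑ k ∈ s, c k * φ (ℓ k z)) y v) x u =
      ∑ k ∈ s, c k * φ'' (ℓ k x) * ℓ k u * ℓ k v := by
  have hnear : ∀ᶠ y in 𝓝 x, ∀ k ∈ s, ℓ k y ∈ S := (eventually_all_finset s).2 fun k hk =>
    (ℓ k).continuous.continuousAt.preimage_mem_nhds (hS.mem_nhds (hx k hk))
  have hfirst : (fun y => fderiv ℝ (fun z => ∑ k ∈ s, c k * φ (ℓ k z)) y v) =ᶠ[𝓝 x]
      fun y => ∑ k ∈ s, c k * φ' (ℓ k y) * ℓ k v := by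
    filter_upwards [hnear] with y hy
    have hd : HasFDerivAt (fun z => ∑ k ∈ s, c k * φ (ℓ k z))
        (∑ k ∈ s, c k • φ' (ℓ k y) • ℓ k) y := HasFDerivAt.fun_sum fun k hk =>
      ((hφ _ (hy k hk)).comp_hasFDerivAt y (ℓ k).hasFDerivAt).const_mul (c k)
    simp [hd.fderiv, mul_assoc]
  have hsecond : HasFDerivAt (fun y => ∑ k ∈ s, c k * φ' (ℓ k y) * ℓ k v)
      (∑ k ∈ s, (c k * ℓ k v) • φ'' (ℓ k x) • ℓ k) x := HasFDerivAt.fun_sum fun k hk => by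
    simpa only [Function.comp_def, mul_right_comm] using
      ((hφ' _ (hx k hk)).comp_hasFDerivAt x (ℓ k).hasFDerivAt).const_mul (c k * ℓ k v)
  rw [hfirst.fderiv_eq, hsecond.fderiv]
  simp only [FunLike.coe_sum, Finset.sum_apply, FunLike.coe_smul, Pi.smul_apply, smul_eq_mul]
  exact sum_congr rfl fun k _ => by ring

theorem sum_apply_single_one {ι R M F : Type*} [Fintype ι] [DecidableEq ι] [Semiring R]
    [AddCommMonoid M] [FunLike F (ι → R) M] [AddMonoidHomClass F (ι → R) M] (ℓ : F) :
    ∑ p, ℓ (Pi.single p 1) = ℓ 1 := by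
  rw [← map_sum, univ_sum_single]
  rfl

section SqMulLog

variable {Λ t : ℝ}

theorem hasDerivAt_log_div_const (hΛ : Λ ≠ 0) (ht : t ≠ 0) :
    HasDerivAt (fun s => log (s / Λ)) t⁻¹ t := by
  refine (((hasDerivAt_id' t).div_const Λ).log (div_ne_zero ht hΛ)).congr_deriv ?_
  field_simp

theorem hasDerivAt_sq_mul_log_div_const (hΛ : Λ ≠ 0) (ht : t ≠ 0) :
    HasDerivAt (fun s => s ^ 2 * log (s / Λ)) (2 * t * log (t / Λ) + t) t := by
  refine ((hasDerivAt_pow 2 t).fun_mul (hasDerivAt_log_div_const hΛ ht)).congr_deriv ?_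
  field_simp
  ring

theorem hasDerivAt_two_mul_mul_log_div_const_add (hΛ : Λ ≠ 0) (ht : t ≠ 0) :
    HasDerivAt (fun s => 2 * s * log (s / Λ) + s) (2 * log (t / Λ) + 3) t := by
  refine ((((hasDerivAt_id' t).const_mul 2).fun_mul (hasDerivAt_log_div_const hΛ ht)).fun_add
    (hasDerivAt_id' t)).congr_deriv ?_
  field_simp
  ring

end SqMulLog

namespace TypeA

variable {N : ℕ}

noncomputable def linearForm : Fin N × Fin N ⊕ Fin N → (Fin N → ℝ) →L[ℝ] ℝ
  | .inl p => .proj p.1 - .proj p.2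
  | .inr a => .proj a

@[simp]
theorem linearForm_inl (p : Fin N × Fin N) (y : Fin N → ℝ) :
    linearForm (.inl p) y = y p.1 - y p.2 := rfl

@[simp]
theorem linearForm_inr (a : Fin N) (y : Fin N → ℝ) : linearForm (.inr a) y = y a := rfl

def linearForms (N : ℕ) : Finset (Fin N × Fin N ⊕ Fin N) :=
  ({p | p.1 < p.2} : Finset (Fin N × Fin N)).disjSum univ

theorem FA_eq_sum_linearForms (Λ : ℝ) :
    FA N Λ = fun x => ∑ k ∈ linearForms N,
      1 / 2 * (linearForm k x ^ 2 * log (linearForm k x / Λ)) := by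
  ext x
  simp [FA, linearForms, sum_disjSum, sum_filter, Fintype.sum_prod_type, mul_sum]

theorem linearForm_pos {x : Fin N → ℝ} (hx : x ∈ cone N) :
    ∀ k ∈ linearForms N, 0 < linearForm k x := by
  rintro (⟨a, b⟩ | a) hk
  · simpa using hx.1 (by simpa [linearForms] using hk)
  · exact hx.2 a

variable {Λ : ℝ} {x : Fin N → ℝ}

theorem hess_FA (hΛ : Λ ≠ 0) (hx : x ∈ cone N) (i j : Fin N) :
    hess (FA N Λ) i j x = ∑ k ∈ linearForms N, 1 / 2 * (2 * log (linearForm k x / Λ) + 3) *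
      linearForm k (Pi.single i 1) * linearForm k (Pi.single j 1) := by
  unfold hess pd
  rw [FA_eq_sum_linearForms]
  exact fderiv_fderiv_apply_sum_comp_clm _ _ _ isOpen_Ioi
    (fun t ht => hasDerivAt_sq_mul_log_div_const hΛ (ne_of_gt ht))
    (fun t ht => hasDerivAt_two_mul_mul_log_div_const_add hΛ (ne_of_gt ht)) (linearForm_pos hx) _ _

theorem hess_FA_of_lt (hΛ : Λ ≠ 0) (hx : x ∈ cone N) {i j : Fin N} (hij : i < j) :
    hess (FA N Λ) i j x = -(log ((x i - x j) / Λ) + 3 / 2) := by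
  rw [hess_FA hΛ hx, linearForms, sum_disjSum, sum_eq_single (i, j) ?_ (by simp [hij]),
    sum_eq_zero fun a _ => ?_]
  · simp only [linearForm_inl, Pi.single_eq_same, Pi.single_eq_of_ne hij.ne,
      Pi.single_eq_of_ne hij.ne', add_zero]
    ring
  · grind [linearForm_inr]
  · rintro ⟨a, b⟩ hab hne
    grind [linearForm_inl]

theorem sum_hess_FA (hΛ : Λ ≠ 0) (hx : x ∈ cone N) (i : Fin N) :
    ∑ p, hess (FA N Λ) i p x = log (x i / Λ) + 3 / 2 := by
  simp_rw [hess_FA hΛ hx, sum_comm (γ := Fin N), ← mul_sum, sum_apply_single_one]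
  rw [linearForms, sum_disjSum, sum_eq_zero fun p _ => by simp, zero_add,
    sum_eq_single i (fun a _ ha => by simp [ha]) (by simp)]
  simp only [linearForm_inr, Pi.single_eq_same, Pi.one_apply]
  ring

end TypeA

theorem typeA_row_relation_general (N : ℕ) (x : Fin N → ℝ) (hx : x ∈ cone N)
    (i j : Fin N) (hij : i < j) :
    Real.exp (-(hess (FA N (Real.exp (3/2))) i j x)) =
      Real.exp (∑ p, hess (FA N (Real.exp (3/2))) i p x)
        - Real.exp (∑ q, hess (FA N (Real.exp (3/2))) j q x) := by
  have hΛ : exp (3 / 2) ≠ 0 := (exp_pos _).ne'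
  have hexp : ∀ t, 0 < t → exp (log (t / exp (3 / 2)) + 3 / 2) = t := fun t ht => by
    rw [log_div ht.ne' hΛ, log_exp, sub_add_cancel, exp_log ht]
  rw [TypeA.hess_FA_of_lt hΛ hx hij, TypeA.sum_hess_FA hΛ hx, TypeA.sum_hess_FA hΛ hx, neg_neg,
    hexp _ (sub_pos.2 (hx.1 hij)), hexp _ (hx.2 i), hexp _ (hx.2 j)]

/-- for the type A prepotential with `Λ = e^{3/2}`, on the cone,
`e^{-T_ij} = e^{∑_p T_ip} - e^{∑_q T_jq}` for all `i < j`. -/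
theorem typeA_row_relation (N : ℕ) (hN : 2 ≤ N) (x : Fin N → ℝ) (hx : x ∈ cone N)
    (i j : Fin N) (hij : i < j) :
    Real.exp (-(hess (FA N (Real.exp (3/2))) i j x)) =
      Real.exp (∑ p, hess (FA N (Real.exp (3/2))) i p x)
        - Real.exp (∑ q, hess (FA N (Real.exp (3/2))) j q x) :=
  typeA_row_relation_general N x hx i j hij
end

section
/- Let N ≥ 2, let C = {x ∈ ℝ^N : x_1 > x_2 > ⋯ > x_N > 0}, and let F be the type A prepotential with Λ = e^{3/2}. Then for all x ∈ C and every index i, e^{∑_{p=1}^N T_ip(x)} = x_i, where T_ij(x) = ∂²F/∂x_i∂x_j(x). -/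
open Real Finset

/-! The `i`-th row sum of the Hessian is `∑ₚ ∂ᵢ∂ₚF = ∂ᵢ(DF · 𝟙)` with `𝟙 = (1, …, 1)`. The
pairwise terms of `F` depend only on the differences `xᵢ - xⱼ`, so they are invariant under
`x ↦ x + t𝟙` and drop out of `DF · 𝟙`, leaving `∑ⱼ (xⱼ log (xⱼ/Λ) + xⱼ/2)`. Its `i`-th partial
derivative is `log (xᵢ/Λ) + 3/2`, which is `log xᵢ` for `Λ = e^{3/2}`. -/

noncomputable def sqLog (Λ u : ℝ) : ℝ := u ^ 2 * Real.log (u / Λ)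

lemma FA_eq_sqLog (N : ℕ) (Λ : ℝ) (x : Fin N → ℝ) :
    FA N Λ x = (1/2) * ∑ i, ∑ j, (if i < j then sqLog Λ (x i - x j) else 0)
      + (1/2) * ∑ i, sqLog Λ (x i) := rfl

section sqLog

variable {Λ u : ℝ}

lemma contDiffAt_sqLog {n : WithTop ℕ∞} (hΛ : Λ ≠ 0) (hu : u ≠ 0) :
    ContDiffAt ℝ n (sqLog Λ) u :=
  (contDiffAt_id.pow 2).mul
    ((Real.contDiffAt_log.2 (div_ne_zero hu hΛ)).comp u (contDiffAt_id.div_const Λ))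

lemma hasDerivAt_sqLog (hΛ : Λ ≠ 0) (hu : u ≠ 0) :
    HasDerivAt (sqLog Λ) (2 * (u * Real.log (u / Λ) + u / 2)) u :=
  ((hasDerivAt_pow 2 u).mul (((hasDerivAt_id' u).div_const Λ).log (div_ne_zero hu hΛ))).congr_deriv
    (by field_simp; ring)

lemma hasDerivAt_half_deriv_sqLog (hΛ : Λ ≠ 0) (hu : u ≠ 0) :
    HasDerivAt (fun v => v * Real.log (v / Λ) + v / 2) (Real.log (u / Λ) + 3 / 2) u :=
  (((hasDerivAt_id' u).mul (((hasDerivAt_id' u).div_const Λ).log (div_ne_zero hu hΛ))).add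
    ((hasDerivAt_id' u).div_const 2)).congr_deriv (by field_simp; ring)

end sqLog

lemma isOpen_cone (N : ℕ) : IsOpen (cone N) := by
  have h : cone N = (⋂ (i) (j) (_ : i < j), {x : Fin N → ℝ | x j < x i}) ∩ ⋂ i, {x | 0 < x i} := by
    ext x
    simp [cone, StrictAnti]
  rw [h]
  exact .inter
    (isOpen_iInter_of_finite fun i => isOpen_iInter_of_finite fun j => isOpen_iInter_of_finite
      fun _ => isOpen_lt (continuous_apply j) (continuous_apply i))
    (isOpen_iInter_of_finite fun i => isOpen_lt continuous_const (continuous_apply i))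

lemma contDiffAt_FA {N : ℕ} {Λ : ℝ} {n : WithTop ℕ∞} (hΛ : Λ ≠ 0) {x : Fin N → ℝ}
    (hx : x ∈ cone N) : ContDiffAt ℝ n (FA N Λ) x := by
  have hproj (i : Fin N) : ContDiffAt ℝ n (fun y : Fin N → ℝ => y i) x :=
    (contDiff_apply ℝ ℝ i).contDiffAt
  refine (contDiffAt_const.mul (ContDiffAt.sum fun i _ => ContDiffAt.sum fun j _ => ?_)).add
    (contDiffAt_const.mul (ContDiffAt.sum fun i _ => ?_))
  · split_ifs with hij
    · exact (contDiffAt_sqLog hΛ (sub_ne_zero.2 (hx.1 hij).ne')).comp x ((hproj i).sub (hproj j))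
    · exact contDiffAt_const
  · exact (contDiffAt_sqLog hΛ (hx.2 i).ne').comp x (hproj i)

lemma hasLineDerivAt_FA_one {N : ℕ} {Λ : ℝ} (hΛ : Λ ≠ 0) {x : Fin N → ℝ} (hx : ∀ i, x i ≠ 0) :
    HasLineDerivAt ℝ (FA N Λ) (∑ i, (x i * Real.log (x i / Λ) + x i / 2)) x (fun _ => 1) := by
  have htrans : (fun t : ℝ => FA N Λ (x + t • fun _ => 1)) = fun t =>
      (1/2) * ∑ i, ∑ j, (if i < j then sqLog Λ (x i - x j) else 0)
        + (1/2) * ∑ i, sqLog Λ (x i + t) := by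
    funext t
    simp [FA_eq_sqLog]
  have hsum := HasDerivAt.fun_sum (u := Finset.univ) fun i _ =>
    (hasDerivAt_sqLog hΛ (by simpa using hx i)).comp (0 : ℝ) ((hasDerivAt_id' 0).const_add (x i))
  unfold HasLineDerivAt
  rw [htrans]
  exact ((hsum.const_mul _).const_add _).congr_deriv (by simp [Finset.mul_sum])

lemma fderiv_FA_one {N : ℕ} {Λ : ℝ} (hΛ : Λ ≠ 0) {x : Fin N → ℝ} (hx : x ∈ cone N) :
    fderiv ℝ (FA N Λ) x (fun _ => 1) = ∑ i, (x i * Real.log (x i / Λ) + x i / 2) := by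
  rw [← ((contDiffAt_FA (n := 1) hΛ hx).differentiableAt one_ne_zero).lineDeriv_eq_fderiv]
  exact (hasLineDerivAt_FA_one hΛ fun i => (hx.2 i).ne').lineDeriv

section pd

variable {N : ℕ}

lemma sum_hess_eq_pd_fderiv_one {f : (Fin N → ℝ) → ℝ} {x : Fin N → ℝ} (hf : ContDiffAt ℝ 2 f x)
    (i : Fin N) : ∑ p, hess f i p x = pd i (fun y => fderiv ℝ f y (fun _ => 1)) x := by
  have hdiff (p : Fin N) : DifferentiableAt ℝ (pd p f) x :=
    ((hf.fderiv_right (m := 1) le_rfl).differentiableAt one_ne_zero).clm_apply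
      (differentiableAt_const _)
  have hone : ∑ p : Fin N, (Pi.single p 1 : Fin N → ℝ) = fun _ => 1 :=
    Finset.univ_sum_single fun _ => 1
  simp only [hess, pd]
  rw [← _root_.sum_apply, ← fderiv_fun_sum fun p _ => hdiff p]
  congr 2 with y
  rw [← hone, map_sum]
  rfl

lemma pd_sum_comp_apply {g g' : ℝ → ℝ} {x : Fin N → ℝ} (hg : ∀ j, HasDerivAt g (g' (x j)) (x j))
    (i : Fin N) : pd i (fun y => ∑ j, g (y j)) x = g' (x i) := by
  have h : HasFDerivAt (fun y : Fin N → ℝ => ∑ j, g (y j))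
      (∑ j, g' (x j) • ContinuousLinearMap.proj j) x :=
    HasFDerivAt.fun_sum fun j _ => (hg j).comp_hasFDerivAt x
      (ContinuousLinearMap.proj (R := ℝ) (φ := fun _ : Fin N => ℝ) j).hasFDerivAt
  simp [pd, h.fderiv, Pi.single_apply]

end pd

theorem sum_hess_FA {N : ℕ} {Λ : ℝ} (hΛ : Λ ≠ 0) {x : Fin N → ℝ} (hx : x ∈ cone N) (i : Fin N) :
    ∑ p, hess (FA N Λ) i p x = Real.log (x i / Λ) + 3 / 2 := by
  have hloc : (fun y => fderiv ℝ (FA N Λ) y (fun _ => 1))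
      =ᶠ[nhds x] fun y => ∑ j, (y j * Real.log (y j / Λ) + y j / 2) :=
    Filter.eventually_of_mem ((isOpen_cone N).mem_nhds hx) fun y hy => fderiv_FA_one hΛ hy
  rw [sum_hess_eq_pd_fderiv_one (contDiffAt_FA hΛ hx), pd, hloc.fderiv_eq]
  exact pd_sum_comp_apply (g' := fun u => Real.log (u / Λ) + 3 / 2)
    (fun j => hasDerivAt_half_deriv_sqLog hΛ (hx.2 j).ne') i

theorem typeA_row_sum_general (N : ℕ) (x : Fin N → ℝ) (hx : x ∈ cone N)
    (i : Fin N) :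
    Real.exp (∑ p, hess (FA N (Real.exp (3/2))) i p x) = x i := by
  rw [sum_hess_FA (Real.exp_ne_zero _) hx, Real.log_div (hx.2 i).ne' (Real.exp_ne_zero _),
    Real.log_exp, sub_add_cancel, Real.exp_log (hx.2 i)]

/-- for the type A prepotential with `Λ = e^{3/2}`, on the cone,
`e^{∑_p T_ip(x)} = x_i` for every `i`. -/
theorem typeA_row_sum (N : ℕ) (hN : 2 ≤ N) (x : Fin N → ℝ) (hx : x ∈ cone N)
    (i : Fin N) :
    Real.exp (∑ p, hess (FA N (Real.exp (3/2))) i p x) = x i :=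
  typeA_row_sum_general N x hx i
end

section
/- Proposition 1 (type A reduction of WDVV): Let N ≥ 2, let U ⊆ ℝ^N be open, and let G : U → ℝ be a smooth function whose Hessian entries T_ij = ∂²G/∂z_i∂z_j satisfy, at every point of U, the type-A reduction: e^{−T_ik} = e^{−T_ij} + e^{−T_jk} for all i < j < k, and e^{−T_ij} = e^{∑_p T_ip} − e^{∑_q T_jq} for all i < j. Then G satisfies the generalized WDVV equations on U: for every z ∈ U and all indices i, j, k such that the matrix G_k(z) is invertible, G_i(z)·G_k(z)^{−1}·G_j(z) = G_j(z)·G_k(z)^{−1}·G_i(z), where (G_m(z))_{rs} = ∂³G/∂z_m∂z_r∂z_s(z). -/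
open Real Finset

/-- The type-A reduction: a second order system on the Hessian entries `T_ij`. -/
def typeAReduction {N : ℕ} (T : Fin N → Fin N → ℝ) : Prop :=
  (∀ i j k : Fin N, i < j → j < k →
      Real.exp (-(T i k)) = Real.exp (-(T i j)) + Real.exp (-(T j k))) ∧
  (∀ i j : Fin N, i < j →
      Real.exp (-(T i j)) = Real.exp (∑ p, T i p) - Real.exp (∑ q, T j q))

/-- `(G_m(z))_{rs} = ∂³G/∂z_m∂z_r∂z_s(z)`, the matrices of third derivatives. -/
noncomputable def thirdDeriv {N : ℕ} (G : (Fin N → ℝ) → ℝ) (m : Fin N)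
    (z : Fin N → ℝ) : Matrix (Fin N) (Fin N) ℝ :=
  Matrix.of fun r s => pd m (pd r (pd s G)) z

/- ### Auxiliary lemmas -/

lemma pd_contDiffAt' {N : ℕ} {f : (Fin N → ℝ) → ℝ} {z : Fin N → ℝ}
    (hf : ContDiffAt ℝ (⊤ : ℕ∞) f z) (i : Fin N) : ContDiffAt ℝ (⊤ : ℕ∞) (pd i f) z := by
  have h1 : ContDiffAt ℝ (⊤ : ℕ∞) (fderiv ℝ f) z := hf.fderiv_right (by simp)
  exact (ContinuousLinearMap.apply ℝ ℝ (Pi.single i 1 : Fin N → ℝ)).contDiff.contDiffAt.comp z h1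

lemma pd_pd' {N : ℕ} {f : (Fin N → ℝ) → ℝ} {z : Fin N → ℝ} (hf : ContDiffAt ℝ (⊤ : ℕ∞) f z)
    (r s : Fin N) :
    pd r (pd s f) z = fderiv ℝ (fderiv ℝ f) z (Pi.single r 1) (Pi.single s 1) := by
  have h1 : ContDiffAt ℝ 1 (fderiv ℝ f) z := hf.fderiv_right (WithTop.coe_le_coe.mpr le_top)
  have h2 : HasFDerivAt (fderiv ℝ f) (fderiv ℝ (fderiv ℝ f) z) z :=
    (h1.differentiableAt one_ne_zero).hasFDerivAt
  have h3 := (ContinuousLinearMap.apply ℝ ℝ (Pi.single s 1 : Fin N → ℝ)).hasFDerivAt.comp z h2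
  have h4 : HasFDerivAt (pd s f)
      (((ContinuousLinearMap.apply ℝ ℝ (Pi.single s 1 : Fin N → ℝ)).comp
        (fderiv ℝ (fderiv ℝ f) z))) z := h3
  rw [pd, h4.fderiv]
  rfl

lemma pd_comm' {N : ℕ} {f : (Fin N → ℝ) → ℝ} {z : Fin N → ℝ} (hf : ContDiffAt ℝ (⊤ : ℕ∞) f z)
    (r s : Fin N) : pd r (pd s f) z = pd s (pd r f) z := by
  rw [pd_pd' hf, pd_pd' hf]
  exact (hf.isSymmSndFDerivAt (by rw [minSmoothness_of_isRCLikeNormedField]; exact WithTop.coe_le_coe.mpr le_top)) _ _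

lemma keyB' {N : ℕ} {U : Set (Fin N → ℝ)} (hU : IsOpen U) (G : (Fin N → ℝ) → ℝ)
    (hG : ContDiffOn ℝ (⊤ : ℕ∞) G U)
    (hred : ∀ z ∈ U, typeAReduction (fun i j => hess G i j z)) {z : Fin N → ℝ} (hz : z ∈ U)
    (m a b : Fin N) (hab : a < b) :
    (Real.exp (∑ p, hess G a p z) - Real.exp (∑ p, hess G b p z)) * thirdDeriv G m z a b
      = Real.exp (∑ p, hess G b p z) * (∑ p, thirdDeriv G m z b p)
        - Real.exp (∑ p, hess G a p z) * (∑ p, thirdDeriv G m z a p) := by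
  have hct : ∀ r s : Fin N, ContDiffAt ℝ (⊤ : ℕ∞) (hess G r s) z := fun r s =>
    pd_contDiffAt' (pd_contDiffAt' (hG.contDiffAt (hU.mem_nhds hz)) s) r
  have hD : ∀ r s : Fin N, HasFDerivAt (hess G r s) (fderiv ℝ (hess G r s) z) z := fun r s =>
    ((hct r s).differentiableAt (by simp)).hasFDerivAt
  set D : Fin N → Fin N → ((Fin N → ℝ) →L[ℝ] ℝ) := fun r s => fderiv ℝ (hess G r s) z with hDdef
  have h1 : HasFDerivAt (fun x => Real.exp (-(hess G a b x)))
      (Real.exp (-(hess G a b z)) • (-(D a b))) z := ((hD a b).neg).exp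
  have h2 : HasFDerivAt (fun x => Real.exp (∑ p, hess G a p x))
      (Real.exp (∑ p, hess G a p z) • (∑ p, D a p)) z :=
    (HasFDerivAt.fun_sum (fun p _ => hD a p)).exp
  have h3 : HasFDerivAt (fun x => Real.exp (∑ p, hess G b p x))
      (Real.exp (∑ p, hess G b p z) • (∑ p, D b p)) z :=
    (HasFDerivAt.fun_sum (fun p _ => hD b p)).exp
  have heq : (fun x => Real.exp (∑ p, hess G a p x) - Real.exp (∑ q, hess G b q x))
      =ᶠ[nhds z] (fun x => Real.exp (-(hess G a b x))) :=
    Filter.eventuallyEq_of_mem (hU.mem_nhds hz) (fun w hw => ((hred w hw).2 a b hab).symm)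
  have h4 : HasFDerivAt (fun x => Real.exp (∑ p, hess G a p x) - Real.exp (∑ q, hess G b q x))
      (Real.exp (-(hess G a b z)) • (-(D a b))) z := h1.congr_of_eventuallyEq heq
  have h6 := h4.unique (h2.sub h3)
  have h7 := congrArg (fun L : (Fin N → ℝ) →L[ℝ] ℝ => L (Pi.single m 1)) h6
  simp only [ContinuousLinearMap.smul_apply, ContinuousLinearMap.neg_apply,
    ContinuousLinearMap.sub_apply, ContinuousLinearMap.sum_apply, smul_eq_mul] at h7
  have happ : ∀ r s : Fin N, D r s (Pi.single m 1) = thirdDeriv G m z r s := fun r s => rfl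
  simp only [happ] at h7
  have hAB : Real.exp (-(hess G a b z))
      = Real.exp (∑ p, hess G a p z) - Real.exp (∑ p, hess G b p z) := (hred z hz).2 a b hab
  rw [hAB] at h7
  ring_nf
  ring_nf at h7
  linarith

lemma hQdet' {N : ℕ} :
    IsUnit (1 + Matrix.of (fun _ _ => (1:ℝ)) : Matrix (Fin N) (Fin N) ℝ).det := by
  set Em : Matrix (Fin N) (Fin N) ℝ := Matrix.of (fun _ _ => (1:ℝ)) with hEm
  have hEE : Em * Em = (N:ℝ) • Em := by
    ext a b; simp [Matrix.mul_apply, hEm]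
  have hmul : (1 + Em) * (1 - (((N:ℝ)+1)⁻¹) • Em) = 1 := by
    have hc : ((N:ℝ)+1) ≠ 0 := by positivity
    have h2 : (1 + Em) * ((((N:ℝ)+1)⁻¹) • Em) = Em := by
      rw [add_mul, one_mul, Matrix.mul_smul, hEE, smul_smul, ← add_smul]
      have h3 : ((N:ℝ)+1)⁻¹ + ((N:ℝ)+1)⁻¹ * (N:ℝ) = 1 := by field_simp; ring
      rw [h3, one_smul]
    rw [mul_sub, mul_one, h2, add_sub_cancel_right]
  exact IsUnit.of_mul_eq_one _ (by rw [← Matrix.det_mul, hmul, Matrix.det_one])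

lemma chainlemma' {N : ℕ} (Λ Q Ci Cj Ck : Matrix (Fin N) (Fin N) ℝ)
    (hΛ : IsUnit Λ.det) (hQ : IsUnit Q.det)
    (hi : Λ*Ci*Q = Q*Ci*Λ) (hj : Λ*Cj*Q = Q*Cj*Λ) (hk : Λ*Ck*Q = Q*Ck*Λ) :
    Λ * (Ci * Ck⁻¹ * Cj) * Q = Q * (Ci * Ck⁻¹ * Cj) * Λ := by
  have hW : Q⁻¹ * (Ck⁻¹ * Λ⁻¹) = Λ⁻¹ * (Ck⁻¹ * Q⁻¹) := by
    have h := congrArg (·⁻¹) hk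
    simpa only [Matrix.mul_inv_rev, Matrix.mul_assoc] using h
  have h1 : Λ * (Ci * Ck⁻¹ * Cj) * Q
      = (Λ*Ci*Q) * ((Q⁻¹ * (Ck⁻¹ * Λ⁻¹)) * (Λ*Cj*Q)) := by
    simp only [Matrix.mul_assoc, Matrix.mul_nonsing_inv_cancel_left _ _ hQ,
      Matrix.nonsing_inv_mul_cancel_left _ _ hΛ]
  rw [h1, hi, hj, hW]
  simp only [Matrix.mul_assoc, Matrix.mul_nonsing_inv_cancel_left _ _ hΛ,
    Matrix.nonsing_inv_mul_cancel_left _ _ hQ]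

lemma antisym_zero' {N : ℕ} (A : Fin N → ℝ) (hApos : ∀ a, 0 < A a)
    (hAne : ∀ a b : Fin N, a ≠ b → A a ≠ A b)
    (Y : Matrix (Fin N) (Fin N) ℝ) (hanti : ∀ a b, Y b a = - Y a b)
    (hrel : Matrix.diagonal A * Y * (1 + Matrix.of (fun _ _ => (1:ℝ)))
      = (1 + Matrix.of (fun _ _ => (1:ℝ))) * Y * Matrix.diagonal A) : Y = 0 := by
  have hent : ∀ a b, A a * Y a b + A a * (∑ t, Y a t)
      = Y a b * A b + (∑ t, Y t b) * A b := by
    intro a b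
    have h : ((Matrix.diagonal A * Y * (1 + Matrix.of (fun _ _ => (1:ℝ)))
          : Matrix (Fin N) (Fin N) ℝ)) a b
        = (((1 + Matrix.of (fun _ _ => (1:ℝ))) * Y * Matrix.diagonal A
          : Matrix (Fin N) (Fin N) ℝ)) a b := by rw [hrel]
    rw [mul_add, mul_one, add_mul, one_mul] at h
    simp only [Matrix.add_apply, Matrix.mul_apply, Matrix.diagonal_apply, ite_mul, mul_ite,
      zero_mul, mul_zero, Finset.sum_ite_eq, Finset.sum_ite_eq', Matrix.of_apply,
      Finset.mem_univ, if_true, mul_one, one_mul] at h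
    rw [← Finset.mul_sum] at h
    rw [h]
    ring_nf
  have hrow : ∀ a, (∑ t, Y a t) = 0 := by
    intro a
    have h := hent a a
    have hcol : (∑ t, Y t a) = - ∑ t, Y a t := by
      rw [← Finset.sum_neg_distrib]
      exact Finset.sum_congr rfl (fun t _ => hanti a t)
    rw [hcol] at h
    have := (hApos a).ne'
    nlinarith [hApos a]
  have hoff : ∀ a b, Y a b = 0 := by
    intro a b
    by_cases hab : a = b
    · subst hab
      have := hanti a a
      linarith
    · have h := hent a b
      have hcol : (∑ t, Y t b) = - ∑ t, Y b t := by
        rw [← Finset.sum_neg_distrib]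
        exact Finset.sum_congr rfl (fun t _ => hanti b t)
      rw [hcol, hrow a, hrow b] at h
      have hA := hAne a b hab
      have : (A a - A b) * Y a b = 0 := by linarith
      rcases mul_eq_zero.mp this with h' | h'
      · exact absurd (by linarith : A a = A b) hA
      · exact h'
  ext a b
  simp [hoff]

/-- Proposition 1: any smooth function on an open set whose Hessian
entries satisfy the type-A reduction satisfies the generalized WDVV equations. -/
theorem typeA_reduction_implies_WDVV (N : ℕ) (hN : 2 ≤ N)
    (U : Set (Fin N → ℝ)) (hU : IsOpen U) (G : (Fin N → ℝ) → ℝ)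
    (hG : ContDiffOn ℝ (⊤ : ℕ∞) G U)
    (hred : ∀ z ∈ U, typeAReduction (fun i j => hess G i j z)) :
    ∀ z ∈ U, ∀ i j k : Fin N, IsUnit (thirdDeriv G k z) →
      thirdDeriv G i z * (thirdDeriv G k z)⁻¹ * thirdDeriv G j z =
        thirdDeriv G j z * (thirdDeriv G k z)⁻¹ * thirdDeriv G i z := by
  intro z hz i j k hk
  have hGat : ∀ w ∈ U, ContDiffAt ℝ (⊤ : ℕ∞) G w := fun w hw => hG.contDiffAt (hU.mem_nhds hw)
  set A : Fin N → ℝ := fun a => Real.exp (∑ p, hess G a p z) with hA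
  set C : Fin N → Matrix (Fin N) (Fin N) ℝ := fun m => thirdDeriv G m z with hC
  -- symmetry of the matrices C m
  have hsym : ∀ m a b : Fin N, C m a b = C m b a := by
    intro m a b
    show pd m (pd a (pd b G)) z = pd m (pd b (pd a G)) z
    have hev : pd a (pd b G) =ᶠ[nhds z] pd b (pd a G) :=
      Filter.eventuallyEq_of_mem (hU.mem_nhds hz) (fun w hw => pd_comm' (hGat w hw) a b)
    show fderiv ℝ (pd a (pd b G)) z (Pi.single m 1) = fderiv ℝ (pd b (pd a G)) z (Pi.single m 1)
    rw [hev.fderiv_eq]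
  -- positivity and distinctness of A
  have hApos : ∀ a, 0 < A a := fun a => Real.exp_pos _
  have hAlt : ∀ a b : Fin N, a < b → A b < A a := by
    intro a b hab
    have h := (hred z hz).2 a b hab
    have := Real.exp_pos (-(hess G a b z))
    simp only [hA]
    linarith [h]
  have hAne : ∀ a b : Fin N, a ≠ b → A a ≠ A b := by
    intro a b hab
    rcases lt_or_gt_of_ne hab with h | h
    · exact (hAlt a b h).ne'
    · exact (hAlt b a h).ne
  -- the matrices
  set Em : Matrix (Fin N) (Fin N) ℝ := Matrix.of (fun _ _ => (1:ℝ)) with hEm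
  set Q : Matrix (Fin N) (Fin N) ℝ := 1 + Em with hQ
  set Λ : Matrix (Fin N) (Fin N) ℝ := Matrix.diagonal A with hΛ
  have hQd : IsUnit Q.det := hQdet'
  have hΛd : IsUnit Λ.det := by
    rw [hΛ, Matrix.det_diagonal]
    exact (Finset.prod_pos (fun a _ => hApos a)).ne'.isUnit
  -- the key relation Λ C Q = Q C Λ
  have hρ : ∀ m, Λ * C m * Q = Q * C m * Λ := by
    intro m
    have hent : ∀ a b, (Λ * C m * Q) a b = A a * C m a b + A a * (∑ t, C m a t) := by
      intro a b
      rw [hQ, mul_add, mul_one]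
      simp [Matrix.add_apply, Matrix.mul_apply, hΛ, Matrix.diagonal_apply, ite_mul, mul_ite,
        zero_mul, mul_zero, Finset.sum_ite_eq, Finset.sum_ite_eq', hEm, Finset.mul_sum]
    have hent' : ∀ a b, (Q * C m * Λ) a b = C m a b * A b + (∑ t, C m t b) * A b := by
      intro a b
      rw [hQ, add_mul, one_mul]
      simp [Matrix.add_apply, Matrix.mul_apply, hΛ, Matrix.diagonal_apply, ite_mul, mul_ite,
        zero_mul, mul_zero, Finset.sum_ite_eq, Finset.sum_ite_eq', hEm, Finset.sum_mul]
      rw [add_mul, Finset.sum_mul]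
    ext a b
    rw [hent, hent']
    have hcol : (∑ t, C m t b) = ∑ t, C m b t :=
      Finset.sum_congr rfl (fun t _ => hsym m t b)
    rw [hcol]
    rcases lt_trichotomy a b with h | h | h
    · have hkey := keyB' hU G hG hred hz m a b h
      change (A a - A b) * C m a b = A b * (∑ p, C m b p) - A a * (∑ p, C m a p) at hkey
      linear_combination hkey
    · subst h; ring
    · have hkey := keyB' hU G hG hred hz m b a h
      change (A b - A a) * C m b a = A a * (∑ p, C m a p) - A b * (∑ p, C m b p) at hkey
      rw [hsym m a b]
      linear_combination -hkey
  -- transposes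
  have hCT : ∀ m, Matrix.transpose (C m) = C m := by
    intro m; ext a b; rw [Matrix.transpose_apply]; exact hsym m b a
  have hWT : Matrix.transpose ((C k)⁻¹) = (C k)⁻¹ := by
    rw [Matrix.transpose_nonsing_inv, hCT]
  -- X and X'
  set X : Matrix (Fin N) (Fin N) ℝ := C i * (C k)⁻¹ * C j with hX
  set X' : Matrix (Fin N) (Fin N) ℝ := C j * (C k)⁻¹ * C i with hX'
  have hXT : Matrix.transpose X = X' := by
    rw [hX, hX', Matrix.transpose_mul, Matrix.transpose_mul, hWT, hCT, hCT, Matrix.mul_assoc]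
  have hXT' : Matrix.transpose X' = X := by
    rw [hX, hX', Matrix.transpose_mul, Matrix.transpose_mul, hWT, hCT, hCT, Matrix.mul_assoc]
  have hXρ : Λ * X * Q = Q * X * Λ := chainlemma' Λ Q _ _ _ hΛd hQd (hρ i) (hρ j) (hρ k)
  have hX'ρ : Λ * X' * Q = Q * X' * Λ := chainlemma' Λ Q _ _ _ hΛd hQd (hρ j) (hρ i) (hρ k)
  -- Y = X - X' is antisymmetric and satisfies the relation, hence zero
  have hY : X - X' = 0 := by
    apply antisym_zero' A hApos hAne
    · intro a b
      have h1 : X b a = X' a b := by rw [← hXT]; rfl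
      have h2 : X' b a = X a b := by rw [← hXT']; rfl
      simp only [Matrix.sub_apply, h1, h2]
      ring
    · rw [Matrix.mul_sub, Matrix.sub_mul, Matrix.mul_sub, Matrix.sub_mul, hXρ, hX'ρ]
  have := sub_eq_zero.mp hY
  exact this
end

section
/- Let N ≥ 2, μ ∈ ℝ, and let P(x) = μ·( ∑_{1≤i<j≤N} (x_i − x_j)² + ∑_{i=1}^N x_i² ). If G is a smooth function on an open set U ⊆ ℝ^N whose Hessian entries T_ij = ∂²G/∂z_i∂z_j satisfy the type-A reduction at every point of U, then the Hessian entries of G + P also satisfy the type-A reduction at every point of U. -/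
open Real Finset

section Helpers

variable {N : ℕ}

noncomputable def prj (a : Fin N) : (Fin N → ℝ) →L[ℝ] ℝ := ContinuousLinearMap.proj a

@[simp] lemma prj_apply (a : Fin N) (w : Fin N → ℝ) : prj a w = w a := rfl

lemma hFD_proj (a : Fin N) (x : Fin N → ℝ) :
    HasFDerivAt (fun w : Fin N → ℝ => w a) (prj a) x :=
  (prj a).hasFDerivAt

lemma hFD_sub (a b : Fin N) (x : Fin N → ℝ) :
    HasFDerivAt (fun w : Fin N → ℝ => w a - w b) (prj a - prj b) x :=
  (hFD_proj a x).sub (hFD_proj b x)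

lemma hFD_sq (a b : Fin N) (x : Fin N → ℝ) :
    HasFDerivAt (fun w : Fin N → ℝ => (w a - w b)^2)
      ((2*(x a - x b)) • (prj a - prj b)) x := by
  have : HasFDerivAt (fun w : Fin N → ℝ => (w a - w b) * (w a - w b)) _ x :=
    (hFD_sub a b x).fun_mul (hFD_sub a b x)
  simp only [pow_two]
  refine this.congr_fderiv ?_
  ext w
  simp; ring

lemma hFD_sq1 (a : Fin N) (x : Fin N → ℝ) :
    HasFDerivAt (fun w : Fin N → ℝ => (w a)^2) ((2*(x a)) • (prj a)) x := by
  have : HasFDerivAt (fun w : Fin N → ℝ => w a * w a) _ x :=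
    (hFD_proj a x).fun_mul (hFD_proj a x)
  simp only [pow_two]
  refine this.congr_fderiv ?_
  ext w
  simp; ring

/-- The perturbation function. -/
noncomputable def Hf (N : ℕ) (μ : ℝ) : (Fin N → ℝ) → ℝ :=
  fun w => μ * ((∑ a : Fin N, ∑ b : Fin N, if a < b then (w a - w b)^2 else 0)
    + ∑ a : Fin N, (w a)^2)

lemma hFD_H (μ : ℝ) (x : Fin N → ℝ) : HasFDerivAt (Hf N μ)
    (μ • ((∑ a : Fin N, ∑ b : Fin N, if a < b then (2*(x a - x b)) • (prj a - prj b) else 0)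
      + ∑ a : Fin N, (2*(x a)) • prj a)) x := by
  refine HasFDerivAt.const_mul (HasFDerivAt.add ?_ (HasFDerivAt.fun_sum fun a _ => hFD_sq1 a x)) μ
  refine HasFDerivAt.fun_sum fun a _ => HasFDerivAt.fun_sum fun b _ => ?_
  by_cases h : a < b
  · simpa [h] using hFD_sq a b x
  · simpa [h] using hasFDerivAt_const (0:ℝ) x

def dd (i a : Fin N) : ℝ := if a = i then 1 else 0

lemma pd_H (μ : ℝ) (j : Fin N) : pd j (Hf N μ) = fun x =>
    μ * ((∑ a : Fin N, ∑ b : Fin N, if a < b then 2*(x a - x b)*(dd j a - dd j b) else 0)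
      + 2 * x j) := by
  funext x
  show fderiv ℝ (Hf N μ) x (Pi.single j 1) = _
  rw [(hFD_H μ x).fderiv]
  simp [ContinuousLinearMap.sum_apply, apply_ite (fun L : (Fin N → ℝ) →L[ℝ] ℝ => L (Pi.single j 1)),
    Pi.single_apply, dd, mul_ite, mul_zero, mul_one, Finset.sum_ite_eq']
  ring

lemma hFD_pdH (μ : ℝ) (j : Fin N) (x : Fin N → ℝ) : HasFDerivAt (pd j (Hf N μ))
    (μ • ((∑ a : Fin N, ∑ b : Fin N,
        if a < b then (dd j a - dd j b) • ((2:ℝ) • (prj a - prj b)) else 0)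
      + (2:ℝ) • prj j)) x := by
  rw [pd_H]
  refine HasFDerivAt.const_mul (HasFDerivAt.add ?_ ?_) μ
  · refine HasFDerivAt.fun_sum fun a _ => HasFDerivAt.fun_sum fun b _ => ?_
    by_cases h : a < b
    · simpa [h] using ((hFD_sub a b x).const_mul 2).mul_const (dd j a - dd j b)
    · simpa [h] using hasFDerivAt_const (0:ℝ) x
  · exact (hFD_proj j x).const_mul 2

lemma hess_H (μ : ℝ) (i j : Fin N) (z : Fin N → ℝ) : hess (Hf N μ) i j z =
    μ * ((∑ a : Fin N, ∑ b : Fin N,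
        if a < b then (dd j a - dd j b) * (2*(dd i a - dd i b)) else 0)
      + 2 * dd i j) := by
  show fderiv ℝ (pd j (Hf N μ)) z (Pi.single i 1) = _
  rw [(hFD_pdH μ j z).fderiv]
  simp [ContinuousLinearMap.sum_apply, apply_ite (fun L : (Fin N → ℝ) →L[ℝ] ℝ => L (Pi.single i 1)),
    Pi.single_apply, dd, mul_ite, mul_zero, mul_one]
  rw [mul_add]
  congr 1
  split <;> ring

lemma W_lt {i j : Fin N} (h : i < j) :
    (∑ a : Fin N, ∑ b : Fin N,
        if a < b then (dd j a - dd j b) * (2*(dd i a - dd i b)) else 0)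
      + 2 * dd i j = -2 := by
  have hji : j ≠ i := h.ne'
  rw [Finset.sum_eq_single i]
  · rw [Finset.sum_eq_single j]
    · simp [dd, h, h.ne, h.ne']
    · intro b _ hb
      by_cases hib : i < b
      · simp [dd, hib, h.ne, hb]
      · simp [hib]
    · simp
  · intro a _ ha
    refine Finset.sum_eq_zero fun b _ => ?_
    by_cases hab : a < b
    · by_cases hbi : b = i
      · subst hbi
        have haj : a ≠ j := ne_of_lt (hab.trans h)
        simp [dd, hab, haj, hji.symm]
      · simp [dd, hab, ha, hbi]
    · simp [hab]
  · simp

lemma W_row (μ : ℝ) (i : Fin N) (z : Fin N → ℝ) :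
    ∑ p : Fin N, hess (Hf N μ) i p z = 2 * μ := by
  have h0 : ∀ a b : Fin N, (∑ p : Fin N,
      if a < b then (dd p a - dd p b) * (2*(dd i a - dd i b)) else 0) = 0 := by
    intro a b
    by_cases hab : a < b
    · simp only [hab, if_true]
      rw [← Finset.sum_mul, Finset.sum_sub_distrib]
      simp [dd, Finset.sum_ite_eq]
    · simp [hab]
  calc ∑ p : Fin N, hess (Hf N μ) i p z
      = ∑ p : Fin N, μ * ((∑ a : Fin N, ∑ b : Fin N,
          if a < b then (dd p a - dd p b) * (2*(dd i a - dd i b)) else 0) + 2 * dd i p) := by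
        exact Finset.sum_congr rfl fun p _ => hess_H μ i p z
    _ = μ * ∑ p : Fin N, ((∑ a : Fin N, ∑ b : Fin N,
          if a < b then (dd p a - dd p b) * (2*(dd i a - dd i b)) else 0) + 2 * dd i p) := by
        rw [Finset.mul_sum]
    _ = 2 * μ := by
        rw [Finset.sum_add_distrib]
        have : (∑ p : Fin N, ∑ a : Fin N, ∑ b : Fin N,
            if a < b then (dd p a - dd p b) * (2*(dd i a - dd i b)) else 0) = 0 := by
          rw [Finset.sum_comm]
          refine Finset.sum_eq_zero fun a _ => ?_
          rw [Finset.sum_comm]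
          exact Finset.sum_eq_zero fun b _ => h0 a b
        rw [this]
        simp [dd, Finset.sum_ite_eq', Finset.mul_sum]
        ring

lemma hess_add (μ : ℝ) {U : Set (Fin N → ℝ)} (hU : IsOpen U) {G : (Fin N → ℝ) → ℝ}
    (hG : ContDiffOn ℝ (⊤ : ℕ∞) G U) {z : Fin N → ℝ} (hz : z ∈ U) (i j : Fin N) :
    hess (fun w => G w + Hf N μ w) i j z = hess G i j z + hess (Hf N μ) i j z := by
  have hev : (pd j fun w => G w + Hf N μ w) =ᶠ[nhds z] fun x => pd j G x + pd j (Hf N μ) x := by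
    filter_upwards [hU.mem_nhds hz] with x hx
    have hGx : DifferentiableAt ℝ G x := (hG.contDiffAt (hU.mem_nhds hx)).differentiableAt (by simp)
    show fderiv ℝ (fun w => G w + Hf N μ w) x (Pi.single j 1) = _
    rw [fderiv_fun_add hGx (hFD_H μ x).differentiableAt]
    rfl
  have hGz : ContDiffAt ℝ (⊤ : ℕ∞) G z := hG.contDiffAt (hU.mem_nhds hz)
  have hdG : DifferentiableAt ℝ (pd j G) z := by
    have h2 : ContDiffAt ℝ (⊤ : ℕ∞) (fderiv ℝ G) z := hGz.fderiv_right (by simp)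
    exact (h2.clm_apply contDiffAt_const).differentiableAt (by simp)
  have hdH : DifferentiableAt ℝ (pd j (Hf N μ)) z := (hFD_pdH μ j z).differentiableAt
  show fderiv ℝ (pd j fun w => G w + Hf N μ w) z (Pi.single i 1) = _
  rw [hev.fderiv_eq, fderiv_fun_add hdG hdH]
  rfl

end Helpers

/-- adding `μ·(∑_{i<j}(x_i-x_j)² + ∑_i x_i²)` to a solution of the
type-A reduction again yields a solution of the type-A reduction. -/
theorem typeA_reduction_symmetry (N : ℕ) (hN : 2 ≤ N) (μ : ℝ)
    (U : Set (Fin N → ℝ)) (hU : IsOpen U) (G : (Fin N → ℝ) → ℝ)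
    (hG : ContDiffOn ℝ (⊤ : ℕ∞) G U)
    (hred : ∀ z ∈ U, typeAReduction (fun i j => hess G i j z)) :
    ∀ z ∈ U, typeAReduction (fun i j =>
      hess (fun w => G w + μ * ((∑ i : Fin N, ∑ j : Fin N,
          (if i < j then (w i - w j)^2 else 0)) + ∑ i : Fin N, (w i)^2)) i j z) := by
  intro z hz
  obtain ⟨h1, h2⟩ := hred z hz
  have key : ∀ (i j : Fin N), hess (fun w => G w + μ * ((∑ i : Fin N, ∑ j : Fin N,
          (if i < j then (w i - w j)^2 else 0)) + ∑ i : Fin N, (w i)^2)) i j z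
      = hess G i j z + hess (Hf N μ) i j z := fun i j => hess_add μ hU hG hz i j
  have hlt : ∀ {i j : Fin N}, i < j → hess (Hf N μ) i j z = μ * (-2) := by
    intro i j h
    rw [hess_H, W_lt h]
  have e : ∀ A : ℝ, Real.exp (-(A + μ * (-2))) = Real.exp (-A) * Real.exp (2*μ) := by
    intro A
    rw [← Real.exp_add]
    ring_nf
  constructor
  · intro i j k hij hjk
    simp only [key, hlt hij, hlt hjk, hlt (hij.trans hjk)]
    rw [e, e, e, h1 i j k hij hjk]
    ring
  · intro i j hij
    simp only [key, hlt hij]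
    have hs : ∀ i : Fin N, ∑ p : Fin N, (hess G i p z + hess (Hf N μ) i p z)
        = (∑ p : Fin N, hess G i p z) + 2 * μ := by
      intro i
      rw [Finset.sum_add_distrib, W_row]
    rw [e, hs i, hs j, Real.exp_add, Real.exp_add, h2 i j hij]
    ring
end

section
/- Let N ≥ 2 and let (T_ij) be a real symmetric N×N matrix whose entries satisfy both relations of the type-A reduction: e^{−T_ik} = e^{−T_ij} + e^{−T_jk} for all i < j < k, and e^{−T_ij} = e^{∑_{p=1}^N T_ip} − e^{∑_{q=1}^N T_jq} for all i < j. Then there exists a unique x ∈ ℝ^N with x_1 > x_2 > ⋯ > x_N > 0 such that e^{−T_ij} = x_i − x_j for all i < j and e^{T_ii} = x_i·∏_{q>i}(x_i − x_q)·∏_{q<i}(x_q − x_i) for all i; namely x_i = e^{∑_{p=1}^N T_ip}. -/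
/-!
The second relation says that the differences of `x_i = e^{∑_p T_ip}` are `x_i - x_j = e^{-T_ij}`
for `i < j`. For any `x` with these differences, symmetry of `T` turns the two products in the
diagonal formula into `e^{-∑_{q ≠ i} T_iq} = e^{T_ii - ∑_p T_ip}`, so the diagonal formula at `i`
says exactly `x_i = e^{∑_p T_ip}`: this gives existence and uniqueness at once.
-/

open Real Finset

theorem Finset.sum_univ_eq_add_sum_filter_lt_add_sum_filter_gt {ι M : Type*} [Fintype ι]
    [LinearOrder ι] [AddCommMonoid M] (f : ι → M) (i : ι) :
    ∑ q, f q = f i + ∑ q ∈ univ.filter (i < ·), f q + ∑ q ∈ univ.filter (· < i), f q := by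
  have hnot_lt : univ.filter (fun q => ¬ i < q) = insert i (univ.filter (· < i)) := by
    ext q
    simp [le_iff_lt_or_eq, or_comm]
  rw [← sum_filter_add_sum_filter_not univ (i < ·), hnot_lt, sum_insert (by simp)]
  abel

section

variable {ι : Type*} [Fintype ι] [LinearOrder ι] {T : ι → ι → ℝ} {x : ι → ℝ}

theorem prod_sub_mul_prod_sub_eq_exp (hsym : ∀ i j, T j i = T i j)
    (hx : ∀ i j, i < j → exp (-T i j) = x i - x j) (i : ι) :
    (∏ q ∈ univ.filter (i < ·), (x i - x q)) * ∏ q ∈ univ.filter (· < i), (x q - x i) =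
      exp (T i i - ∑ p, T i p) := by
  have hgt : ∏ q ∈ univ.filter (i < ·), (x i - x q) =
      exp (-∑ q ∈ univ.filter (i < ·), T i q) := by
    rw [← sum_neg_distrib, exp_sum]
    exact prod_congr rfl fun q hq => (hx i q (mem_filter.mp hq).2).symm
  have hlt : ∏ q ∈ univ.filter (· < i), (x q - x i) =
      exp (-∑ q ∈ univ.filter (· < i), T i q) := by
    rw [← sum_neg_distrib, exp_sum]
    exact prod_congr rfl fun q hq => hsym q i ▸ (hx q i (mem_filter.mp hq).2).symm
  rw [hgt, hlt, ← exp_add, sum_univ_eq_add_sum_filter_lt_add_sum_filter_gt (T i) i]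
  ring_nf

theorem exp_diag_eq_mul_prod_sub_iff (hsym : ∀ i j, T j i = T i j)
    (hx : ∀ i j, i < j → exp (-T i j) = x i - x j) (i : ι) :
    exp (T i i) = x i * (∏ q ∈ univ.filter (i < ·), (x i - x q))
        * (∏ q ∈ univ.filter (· < i), (x q - x i)) ↔ x i = exp (∑ p, T i p) := by
  rw [mul_assoc, prod_sub_mul_prod_sub_eq_exp hsym hx, exp_sub]
  constructor
  · intro h
    field_simp at h
    linarith
  · intro h
    rw [h]
    field_simp

end

theorem typeA_reduction_unique_point_general (N : ℕ) (T : Fin N → Fin N → ℝ)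
    (hsym : ∀ i j : Fin N, T j i = T i j) (hred : typeAReduction T) :
    (∃! x : Fin N → ℝ, (StrictAnti x ∧ ∀ i, 0 < x i) ∧
      (∀ i j : Fin N, i < j → Real.exp (-(T i j)) = x i - x j) ∧
      (∀ i : Fin N, Real.exp (T i i) =
        x i * (∏ q ∈ Finset.univ.filter (fun q => i < q), (x i - x q))
            * (∏ q ∈ Finset.univ.filter (fun q => q < i), (x q - x i)))) ∧
    (let x : Fin N → ℝ := fun i => Real.exp (∑ p, T i p)
     (StrictAnti x ∧ ∀ i, 0 < x i) ∧
      (∀ i j : Fin N, i < j → Real.exp (-(T i j)) = x i - x j) ∧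
      (∀ i : Fin N, Real.exp (T i i) =
        x i * (∏ q ∈ Finset.univ.filter (fun q => i < q), (x i - x q))
            * (∏ q ∈ Finset.univ.filter (fun q => q < i), (x q - x i)))) := by
  set x : Fin N → ℝ := fun i => exp (∑ p, T i p)
  have hdiff : ∀ i j, i < j → exp (-T i j) = x i - x j := hred.2
  have hx : (StrictAnti x ∧ ∀ i, 0 < x i) ∧ (∀ i j, i < j → exp (-T i j) = x i - x j) ∧
      ∀ i, exp (T i i) = x i * (∏ q ∈ univ.filter (i < ·), (x i - x q))
        * (∏ q ∈ univ.filter (· < i), (x q - x i)) :=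
    ⟨⟨fun i j hij => sub_pos.mp (hdiff i j hij ▸ exp_pos _), fun i => exp_pos _⟩, hdiff,
      fun i => (exp_diag_eq_mul_prod_sub_iff hsym hdiff i).mpr rfl⟩
  exact ⟨⟨x, hx, fun y ⟨_, hy, hydiag⟩ =>
    funext fun i => (exp_diag_eq_mul_prod_sub_iff hsym hy i).mp (hydiag i)⟩, hx⟩

/-- a symmetric matrix satisfying the type-A reduction is the Hessian
value of the type A prepotential at a unique point of the cone, namely
`x_i = e^{∑_p T_ip}`. -/
theorem typeA_reduction_unique_point (N : ℕ) (hN : 2 ≤ N) (T : Fin N → Fin N → ℝ)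
    (hsym : ∀ i j : Fin N, T j i = T i j) (hred : typeAReduction T) :
    (∃! x : Fin N → ℝ, (StrictAnti x ∧ ∀ i, 0 < x i) ∧
      (∀ i j : Fin N, i < j → Real.exp (-(T i j)) = x i - x j) ∧
      (∀ i : Fin N, Real.exp (T i i) =
        x i * (∏ q ∈ Finset.univ.filter (fun q => i < q), (x i - x q))
            * (∏ q ∈ Finset.univ.filter (fun q => q < i), (x q - x i)))) ∧
    (let x : Fin N → ℝ := fun i => Real.exp (∑ p, T i p)
     (StrictAnti x ∧ ∀ i, 0 < x i) ∧
      (∀ i j : Fin N, i < j → Real.exp (-(T i j)) = x i - x j) ∧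
      (∀ i : Fin N, Real.exp (T i i) =
        x i * (∏ q ∈ Finset.univ.filter (fun q => i < q), (x i - x q))
            * (∏ q ∈ Finset.univ.filter (fun q => q < i), (x q - x i)))) :=
  typeA_reduction_unique_point_general N T hsym hred
end
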